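/- Let G = (V,E) be a DAG, let L ⊆ V, and let M = G[∅_L. Suppose that A → V₁ ↔ ⋯ ↔ Vₖ ↔ X → D or A ↔ V₁ ↔ ⋯ ↔ Vₖ ↔ X → D is a path in M (possibly k = 0), that each Vᵢ is a parent of D in M, and that there exists an inducing path from X to D with respect to ∅ and L in G that has arrowheads at both ends. Then A and D cannot be m-separated in M, i.e., no set Z of nodes of M with A, D ∉ Z m-separates A and D in M. -/

import Mathlib

/-!
Common definitions: mixed graphs, walks, colliders, m-separation,
ancestral graphs, DAGs, MAGs, proper causal paths, adjustment criteria,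
inducing paths, and MAG marginalization.
-/

universe u

/-- The four possible kinds of edges of a mixed graph, oriented along the
direction of traversal: `u → v`, `u ← v`, `u ↔ v`, `u − v`. -/
inductive EType where
  | right : EType
  | left : EType
  | both : EType
  | undirEdge : EType
deriving DecidableEq

namespace EType

/-- The edge has an arrowhead at its first endpoint. -/
def headFst : EType → Prop
  | .left => True
  | .both => True
  | _ => False

/-- The edge has an arrowhead at its second endpoint. -/
def headSnd : EType → Prop
  | .right => True
  | .both => True
  | _ => False

end EType

/-- A mixed graph with directed, bidirected and undirected edges. -/
structure MixedGraph (V : Type u) where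
  dir : V → V → Prop
  bi : V → V → Prop
  undir : V → V → Prop
  bi_symm : ∀ u v, bi u v → bi v u
  undir_symm : ∀ u v, undir u v → undir v u

namespace MixedGraph

variable {V : Type u}

/-- `G.IsEdge e u v` holds if the graph contains the edge `e` from `u` to `v`
(read in the direction of traversal). -/
def IsEdge (G : MixedGraph V) : EType → V → V → Prop
  | .right, u, v => G.dir u v
  | .left, u, v => G.dir v u
  | .both, u, v => G.bi u v
  | .undirEdge, u, v => G.undir u v

/-- Walks in a mixed graph, remembering the type of every traversed edge. -/
inductive Walk (G : MixedGraph V) : V → V → Type u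
  | nil (v : V) : Walk G v v
  | cons (u v w : V) (e : EType) (h : G.IsEdge e u v) (p : Walk G v w) : Walk G u w

namespace Walk

variable {G : MixedGraph V}

/-- The list of nodes visited by a walk (with multiplicity). -/
def support : {a b : V} → G.Walk a b → List V
  | _, _, .nil v => [v]
  | _, _, .cons u _ _ _ _ p => u :: p.support

/-- A path is a walk without repeated nodes. -/
def IsPath {a b : V} (p : G.Walk a b) : Prop := p.support.Nodup

/-- Auxiliary m-connectivity check: `ph` records whether the previous edge of
the walk has an arrowhead at the current start node.  At every interior node,
the node must be a collider (two arrowheads meet) iff it belongs to `Z`. -/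
def connFrom (Z : Set V) : Prop → {a b : V} → G.Walk a b → Prop
  | _, _, _, .nil _ => True
  | ph, _, _, .cons u _ _ e _ p =>
      ((ph ∧ e.headFst) ↔ u ∈ Z) ∧ p.connFrom Z e.headSnd

/-- The walk m-connects its endpoints given `Z`: all colliders and only
colliders on it are in `Z`. -/
def ConnBy (Z : Set V) : {a b : V} → G.Walk a b → Prop
  | _, _, .nil _ => True
  | _, _, .cons _ _ _ e _ p => p.connFrom Z e.headSnd

/-- A causal (directed) walk: every edge points towards the end node. -/
def IsCausal : {a b : V} → G.Walk a b → Prop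
  | _, _, .nil _ => True
  | _, _, .cons _ _ _ e _ p => e = EType.right ∧ p.IsCausal

/-- A walk is proper w.r.t. `X` if only its start node may belong to `X`. -/
def ProperFrom (X : Set V) : {a b : V} → G.Walk a b → Prop
  | _, _, .nil _ => True
  | _, _, .cons _ _ _ _ _ p => ∀ n ∈ p.support, n ∉ X

/-- Concatenation of walks. -/
def append : {a b c : V} → G.Walk a b → G.Walk b c → G.Walk a c
  | _, _, _, .nil _, q => q
  | _, _, _, .cons u v _ e h p, q => .cons u v _ e h (p.append q)

/-- The walk is nonempty and its first edge has an arrowhead at the start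
node. -/
def headAtStart : {a b : V} → G.Walk a b → Prop
  | _, _, .nil _ => False
  | _, _, .cons _ _ _ e _ _ => e.headFst

/-- The walk is nonempty and its last edge has an arrowhead at the end node. -/
def headAtEnd : {a b : V} → G.Walk a b → Prop
  | _, _, .nil _ => False
  | _, _, .cons _ _ _ e _ (.nil _) => e.headSnd
  | _, _, .cons _ _ _ _ _ p => p.headAtEnd

/-- `P` holds of every (ordered) pair of consecutive nodes of the walk. -/
def edgeProp (P : V → V → Prop) : {a b : V} → G.Walk a b → Prop
  | _, _, .nil _ => True
  | _, _, .cons u v _ _ _ p => P u v ∧ p.edgeProp P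

end Walk

/-- `x` and `y` are m-connected given `Z`: there is a walk between them on
which all colliders and only colliders are in `Z`. -/
def MConn (G : MixedGraph V) (Z : Set V) (x y : V) : Prop :=
  ∃ p : G.Walk x y, p.ConnBy Z

/-- `Z` m-separates the node sets `X` and `Y`. -/
def MSep (G : MixedGraph V) (X Y Z : Set V) : Prop :=
  ∀ x ∈ X, ∀ y ∈ Y, ¬ G.MConn Z x y

/-- `Z` is an m-separator relative to `(X, Y)`: it is disjoint from `X ∪ Y`
and m-separates `X` and `Y`. -/
def IsMSep (G : MixedGraph V) (X Y Z : Set V) : Prop :=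
  Disjoint Z (X ∪ Y) ∧ G.MSep X Y Z

/-- An `M`-minimal m-separator relative to `(X, Y)`. -/
def IsMinMSep (G : MixedGraph V) (X Y M Z : Set V) : Prop :=
  G.IsMSep X Y Z ∧ M ⊆ Z ∧ ∀ Z', Z' ⊂ Z → M ⊆ Z' → ¬ G.IsMSep X Y Z'

/-- One step of the anterior relation: a directed or undirected edge. -/
def antEdge (G : MixedGraph V) (u v : V) : Prop := G.dir u v ∨ G.undir u v

/-- `u` is an anterior of `v` (every node is its own anterior). -/
def Anterior (G : MixedGraph V) (u v : V) : Prop :=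
  Relation.ReflTransGen G.antEdge u v

/-- The set of anteriors of nodes of `W`. -/
def Ant (G : MixedGraph V) (W : Set V) : Set V := {u | ∃ w ∈ W, G.Anterior u w}

/-- `v` is a descendant of `u`, i.e. there is a directed path `u → ⋯ → v`
(every node is its own descendant/ancestor). -/
def Anc (G : MixedGraph V) (u v : V) : Prop := Relation.ReflTransGen G.dir u v

/-- The set of descendants of nodes of `W`. -/
def De (G : MixedGraph V) (W : Set V) : Set V := {v | ∃ w ∈ W, G.Anc w v}

/-- The set of ancestors of nodes of `W`. -/
def AnSet (G : MixedGraph V) (W : Set V) : Set V := {v | ∃ w ∈ W, G.Anc v w}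

/-- An ancestral graph: (1) for each edge `a ← b` or `a ↔ b`, `a` is not an
anterior of `b`; (2) for each edge `a − b` there is no edge `a ← c`, `a ↔ c`,
`b ← c` or `b ↔ c`. -/
def IsAG (G : MixedGraph V) : Prop :=
  (∀ a b, G.dir b a ∨ G.bi a b → ¬ G.Anterior a b) ∧
  (∀ a b, G.undir a b →
    ∀ c, ¬ G.dir c a ∧ ¬ G.bi a c ∧ ¬ G.dir c b ∧ ¬ G.bi b c)

/-- A DAG: only directed edges, and no directed cycles. -/
def IsDAG (G : MixedGraph V) : Prop :=
  (∀ u v, ¬ G.bi u v) ∧ (∀ u v, ¬ G.undir u v) ∧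
  (∀ v, ¬ Relation.TransGen G.dir v v)

/-- Two nodes are adjacent if they are joined by some edge. -/
def Adjacent (G : MixedGraph V) (u v : V) : Prop :=
  G.dir u v ∨ G.dir v u ∨ G.bi u v ∨ G.undir u v

/-- A maximal ancestral graph (MAG): only directed and bidirected edges, no
directed cycle, no almost-directed cycle, and every pair of non-adjacent
nodes can be m-separated by some set of the remaining nodes. -/
def IsMAG (G : MixedGraph V) : Prop :=
  (∀ u v, ¬ G.undir u v) ∧
  (∀ v, ¬ Relation.TransGen G.dir v v) ∧
  (∀ u v, G.bi u v → ¬ Relation.TransGen G.dir v u) ∧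
  (∀ u v, u ≠ v → ¬ G.Adjacent u v →
    ∃ Z : Set V, u ∉ Z ∧ v ∉ Z ∧ ¬ G.MConn Z u v)

/-- `PCP G X Y`: the set of nodes, excluding nodes of `X`, that lie on a
proper causal path from `X` to `Y`. -/
def PCP (G : MixedGraph V) (X Y : Set V) : Set V :=
  {w | w ∉ X ∧ ∃ x ∈ X, ∃ y ∈ Y, ∃ p : G.Walk x y,
    p.IsPath ∧ p.IsCausal ∧ p.ProperFrom X ∧ w ∈ p.support}

/-- `Dpcp G X Y`: the descendants of nodes on proper causal paths. -/
def Dpcp (G : MixedGraph V) (X Y : Set V) : Set V := G.De (G.PCP X Y)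

/-- Remove from `G` all edges into `A` and all edges out of `B`. -/
def rmInOut (G : MixedGraph V) (A B : Set V) : MixedGraph V where
  dir u v := G.dir u v ∧ v ∉ A ∧ u ∉ B
  bi u v := G.bi u v ∧ u ∉ A ∧ v ∉ A
  undir u v := G.undir u v ∧ u ∉ B ∧ v ∉ B
  bi_symm := fun u v h => ⟨G.bi_symm u v h.1, h.2.2, h.2.1⟩
  undir_symm := fun u v h => ⟨G.undir_symm u v h.1, h.2.2, h.2.1⟩

/-- The parametrized proper back-door graph: remove every edge `x → d` with
`x ∈ X` and `d ∈ PCP(X,Y) ∪ C`. -/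
def pbdC (G : MixedGraph V) (X Y C : Set V) : MixedGraph V where
  dir u v := G.dir u v ∧ ¬(u ∈ X ∧ v ∈ G.PCP X Y ∪ C)
  bi := G.bi
  undir := G.undir
  bi_symm := G.bi_symm
  undir_symm := G.undir_symm

/-- The proper back-door graph. -/
def pbd (G : MixedGraph V) (X Y : Set V) : MixedGraph V := G.pbdC X Y ∅

/-- The adjustment criterion (AC) in a DAG: (a) no element of `Z` is a
descendant in `G_{X̄}` of a node outside `X` lying on a proper causal path
from `X` to `Y`; (b) every proper non-causal path from `X` to `Y` is blocked
by `Z`. -/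
def SatisfiesACdag (G : MixedGraph V) (X Y Z : Set V) : Prop :=
  (∀ z ∈ Z, z ∉ (G.rmInOut X ∅).De (G.PCP X Y)) ∧
  (∀ x ∈ X, ∀ y ∈ Y, ∀ p : G.Walk x y,
    p.IsPath → p.ProperFrom X → ¬ p.IsCausal → ¬ p.ConnBy Z)

/-- The adjustment criterion (AC) in a MAG: (a) no element of `Z` is a
descendant in `M` of a node outside `X` lying on a proper causal path from
`X` to `Y`; (b) every proper non-causal path from `X` to `Y` is blocked by
`Z`. -/
def SatisfiesACmag (G : MixedGraph V) (X Y Z : Set V) : Prop :=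
  (∀ z ∈ Z, z ∉ G.Dpcp X Y) ∧
  (∀ x ∈ X, ∀ y ∈ Y, ∀ p : G.Walk x y,
    p.IsPath → p.ProperFrom X → ¬ p.IsCausal → ¬ p.ConnBy Z)

/-- The constructive back-door criterion (CBC): (a) `Z` avoids
`Dpcp(X,Y)`; (b) `Z` m-separates `X` and `Y` in the proper back-door
graph. -/
def SatisfiesCBC (G : MixedGraph V) (X Y Z : Set V) : Prop :=
  (∀ z ∈ Z, z ∉ G.Dpcp X Y) ∧ (G.pbd X Y).MSep X Y Z

/-- The parametrized constructive back-door criterion CBC(A,B,C). -/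
def SatisfiesCBCP (G : MixedGraph V) (X Y Z A B C : Set V) : Prop :=
  (∀ z ∈ Z, z ∉ (G.rmInOut A B).De (G.PCP X Y)) ∧ (G.pbdC X Y C).MSep X Y Z

namespace Walk

variable {G : MixedGraph V}

/-- Auxiliary check for inducing paths: every interior non-collider is in
`L`, and every interior collider is an ancestor of a node of `T`.  `ph`
records whether the previous edge has an arrowhead at the current node. -/
def indFrom (L T : Set V) : Prop → {a b : V} → G.Walk a b → Prop
  | _, _, _, .nil _ => True
  | ph, _, _, .cons u _ _ e _ p =>
      ((ph ∧ e.headFst) → ∃ t ∈ T, Relation.ReflTransGen G.dir u t) ∧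
      (¬(ph ∧ e.headFst) → u ∈ L) ∧ p.indFrom L T e.headSnd

/-- Interior conditions for inducing paths (endpoints are exempt). -/
def indBody (L T : Set V) : {a b : V} → G.Walk a b → Prop
  | _, _, .nil _ => True
  | _, _, .cons _ _ _ e _ p => p.indFrom L T e.headSnd

end Walk

/-- `p` is an inducing path with respect to `Z` and `L`: a path on which
every non-collider other than the endpoints is in `L` and every collider is
an ancestor of the endpoints or of `Z`. -/
def IsInducing (G : MixedGraph V) (Z L : Set V) {a b : V} (p : G.Walk a b) : Prop :=
  p.IsPath ∧ p.indBody L ({a, b} ∪ Z)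

/-- Adjacency in the MAG `G[∅_L`: `u, v ∉ L` are adjacent iff they cannot be
d-separated in `G` by any set `W ⊆ V∖L` (not containing `u, v`). -/
def magAdj (G : MixedGraph V) (L : Set V) (u v : V) : Prop :=
  u ∉ L ∧ v ∉ L ∧ u ≠ v ∧
  ∀ W : Set V, Disjoint W L → u ∉ W → v ∉ W → (G.MConn W u v ∧ G.MConn W v u)

/-- The MAG `G[∅_L` obtained from the DAG `G` by marginalizing `L`: adjacent
`u, v` are joined by `u → v` if `u` is an ancestor of `v` in `G` and `v` is
not an ancestor of `u`, and by `u ↔ v` if neither is an ancestor of the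
other. -/
def mag (G : MixedGraph V) (L : Set V) : MixedGraph V where
  dir u v := G.magAdj L u v ∧ G.Anc u v ∧ ¬ G.Anc v u
  bi u v := G.magAdj L u v ∧ ¬ G.Anc u v ∧ ¬ G.Anc v u
  undir _ _ := False
  bi_symm := fun u v h =>
    ⟨⟨h.1.2.1, h.1.1, h.1.2.2.1.symm,
      fun W hW hv hu => ⟨(h.1.2.2.2 W hW hu hv).2, (h.1.2.2.2 W hW hu hv).1⟩⟩,
      h.2.2, h.2.1⟩
  undir_symm := fun _ _ h => h.elim

/-- An inducing `Z`-trail in the MAG `G[∅_L`: a path whose interior nodes are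
exactly the `Z`-nodes on it, each consecutive pair being linked in `G` by an
inducing path w.r.t. `∅, L` which has arrowheads at the interior nodes. -/
def IsInducingZTrail (G : MixedGraph V) (Z L : Set V) {a b : V}
    (p : (G.mag L).Walk a b) : Prop :=
  p.IsPath ∧ a ∉ Z ∧ b ∉ Z ∧
  (∀ v ∈ p.support, v ≠ a → v ≠ b → v ∈ Z) ∧
  p.edgeProp (fun u v => ∃ q : G.Walk u v, G.IsInducing ∅ L q ∧
    (u ∈ Z → q.headAtStart) ∧ (v ∈ Z → q.headAtEnd))

end MixedGraph

open MixedGraph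

variable {V : Type u}


/-! ### Auxiliary machinery for statement 19 -/

section Aux19

open Relation

/-- Bool-valued head-at-first-endpoint. -/
def hfbE : EType → Bool
  | .left => true
  | .both => true
  | _ => false

/-- Bool-valued head-at-second-endpoint. -/
def hsbE : EType → Bool
  | .right => true
  | .both => true
  | _ => false

/-- Reversed edge type. -/
def revET : EType → EType
  | .right => .left
  | .left => .right
  | .both => .both
  | .undirEdge => .undirEdge

lemma headFst_iff_hfbE (e : EType) : e.headFst ↔ hfbE e = true := by
  cases e <;> simp [EType.headFst, hfbE]

lemma headSnd_iff_hsbE (e : EType) : e.headSnd ↔ hsbE e = true := by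
  cases e <;> simp [EType.headSnd, hsbE]

lemma hfbE_rev (e : EType) : hfbE (revET e) = hsbE e := by cases e <;> rfl

lemma hsbE_rev (e : EType) : hsbE (revET e) = hfbE e := by cases e <;> rfl

namespace MixedGraph

variable {G : MixedGraph V}

lemma isEdge_rev {e : EType} {u v : V} (h : G.IsEdge e u v) :
    G.IsEdge (revET e) v u := by
  cases e with
  | right => exact h
  | left => exact h
  | both => exact G.bi_symm _ _ h
  | undirEdge => exact G.undir_symm _ _ h

namespace Walk

/-- Head-at-end status (with default `ph` for the empty walk). -/
def endHd (ph : Bool) : {a b : V} → G.Walk a b → Bool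
  | _, _, .nil _ => ph
  | _, _, .cons _ _ _ e _ p => endHd (hsbE e) p

/-- Head-at-start status (with default `ph` for the empty walk). -/
def startHd (ph : Bool) : {a b : V} → G.Walk a b → Bool
  | _, _, .nil _ => ph
  | _, _, .cons _ _ _ e _ _ => hfbE e

/-- Bool version of `connFrom`. -/
def connB (W : Set V) : Bool → {a b : V} → G.Walk a b → Prop
  | _, _, _, .nil _ => True
  | ph, _, _, .cons u _ _ e _ p =>
      (((ph && hfbE e) = true) ↔ u ∈ W) ∧ connB W (hsbE e) p

/-- Bool version of `ConnBy`. -/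
def cB (W : Set V) : {a b : V} → G.Walk a b → Prop
  | _, _, .nil _ => True
  | _, _, .cons _ _ _ e _ p => connB W (hsbE e) p

/-- Bool version of `indFrom` with an ancestor-set `S`. -/
def iB (S L : Set V) : Bool → {a b : V} → G.Walk a b → Prop
  | _, _, _, .nil _ => True
  | ph, _, _, .cons u _ _ e _ p =>
      ((ph && hfbE e) = true → u ∈ S) ∧ (¬ ((ph && hfbE e) = true) → u ∈ L) ∧
        iB S L (hsbE e) p

/-- All nodes of a walk except the last one. -/
def heads : {a b : V} → G.Walk a b → List V
  | _, _, .nil _ => []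
  | _, _, .cons u _ _ _ _ p => u :: heads p

/-- Reversal of a walk. -/
def rev : {a b : V} → G.Walk a b → G.Walk b a
  | _, _, .nil v => .nil v
  | _, _, .cons u v _ e h p =>
      (rev p).append (.cons v u u (revET e) (isEdge_rev h) (.nil u))

/-- All edges of the walk are `.right` (a directed walk). -/
def RW : {a b : V} → G.Walk a b → Prop
  | _, _, .nil _ => True
  | _, _, .cons _ _ _ e _ p => e = .right ∧ RW p

/-- No node of the walk except possibly the last is in `W`. -/
def hNoW (W : Set V) : {a b : V} → G.Walk a b → Prop
  | _, _, .nil _ => True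
  | _, _, .cons u _ _ _ _ p => u ∉ W ∧ hNoW W p

/-- No interior node of the walk is in `W`. -/
def tNoW (W : Set V) : {a b : V} → G.Walk a b → Prop
  | _, _, .nil _ => True
  | _, _, .cons _ _ _ _ _ p => hNoW W p

variable {W S L Z : Set V}

lemma endHd_append : ∀ {a b c : V} (w₁ : G.Walk a b) (w₂ : G.Walk b c) (ph : Bool),
    endHd ph (w₁.append w₂) = endHd (endHd ph w₁) w₂ := by
  intro a b c w₁
  induction w₁ with
  | nil v => intro w₂ ph; rfl
  | cons u v w e h p ih => intro w₂ ph; exact ih w₂ (hsbE e)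

lemma startHd_append : ∀ {a b c : V} (w₁ : G.Walk a b) (w₂ : G.Walk b c) (ph : Bool),
    startHd ph (w₁.append w₂) = startHd (startHd ph w₂) w₁ := by
  intro a b c w₁ w₂ ph
  cases w₁ <;> rfl

lemma connB_append : ∀ {a b c : V} (w₁ : G.Walk a b) (w₂ : G.Walk b c) (ph : Bool),
    connB W ph (w₁.append w₂) ↔ connB W ph w₁ ∧ connB W (endHd ph w₁) w₂ := by
  intro a b c w₁
  induction w₁ with
  | nil v => intro w₂ ph; simp [Walk.append, connB, endHd]
  | cons u v w e h p ih =>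
      intro w₂ ph
      show (_ ∧ connB W (hsbE e) (p.append w₂)) ↔ _
      rw [ih w₂ (hsbE e)]
      show _ ↔ (_ ∧ connB W (hsbE e) p) ∧ connB W (endHd (hsbE e) p) w₂
      tauto

lemma iB_append : ∀ {a b c : V} (w₁ : G.Walk a b) (w₂ : G.Walk b c) (ph : Bool),
    iB S L ph (w₁.append w₂) ↔ iB S L ph w₁ ∧ iB S L (endHd ph w₁) w₂ := by
  intro a b c w₁
  induction w₁ with
  | nil v => intro w₂ ph; simp [Walk.append, iB, endHd]
  | cons u v w e h p ih =>
      intro w₂ ph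
      show (_ ∧ _ ∧ iB S L (hsbE e) (p.append w₂)) ↔ _
      rw [ih w₂ (hsbE e)]
      show _ ↔ (_ ∧ _ ∧ iB S L (hsbE e) p) ∧ iB S L (endHd (hsbE e) p) w₂
      tauto

lemma startHd_rev : ∀ {a b : V} (w : G.Walk a b) (ph : Bool),
    startHd ph (rev w) = endHd ph w := by
  intro a b w
  induction w with
  | nil v => intro ph; rfl
  | cons u v w e h p ih =>
      intro ph
      show startHd ph ((rev p).append _) = _
      rw [startHd_append]
      show startHd (hfbE (revET e)) (rev p) = _
      rw [hfbE_rev, ih (hsbE e)]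
      rfl

lemma endHd_rev : ∀ {a b : V} (w : G.Walk a b) (ph : Bool),
    endHd ph (rev w) = startHd ph w := by
  intro a b w
  induction w with
  | nil v => intro ph; rfl
  | cons u v w e h p ih =>
      intro ph
      show endHd ph ((rev p).append _) = _
      rw [endHd_append]
      show endHd (hsbE (revET e)) (.nil u) = _
      rw [hsbE_rev]
      rfl

lemma connB_proj : ∀ {a b : V} {w : G.Walk a b} {ph : Bool},
    connB W ph w → cB W w := by
  intro a b w ph h
  cases w with
  | nil v => trivial
  | cons u v w e he p => exact h.2

lemma glue2 : ∀ {a b : V} {w : G.Walk a b} {ph : Bool},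
    cB W w → (((ph && startHd false w) = true) ↔ a ∈ W) → connB W ph w := by
  intro a b w ph h1 h2
  cases w with
  | nil v => trivial
  | cons u v w e he p => exact ⟨h2, h1⟩

lemma cB_append : ∀ {a b c : V} {w₁ : G.Walk a b} {w₂ : G.Walk b c},
    cB W w₁ → connB W (endHd false w₁) w₂ → cB W (w₁.append w₂) := by
  intro a b c w₁ w₂ h1 h2
  cases w₁ with
  | nil v => exact connB_proj h2
  | cons u v w e he p =>
      show connB W (hsbE e) (p.append w₂)
      exact (connB_append p w₂ (hsbE e)).mpr ⟨h1, h2⟩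

lemma cB_rev : ∀ {a b : V} {w : G.Walk a b}, cB W w → cB W (rev w) := by
  intro a b w
  induction w with
  | nil v => intro _; trivial
  | cons u v w e he p ih =>
      intro hw
      show cB W ((rev p).append _)
      cases p with
      | nil _ =>
          show cB W (Walk.append (.nil _) _)
          trivial
      | cons v v' w' e' he' p' =>
          have hw' : ((hsbE e && hfbE e') = true ↔ v ∈ W) ∧ connB W (hsbE e') p' := hw
          refine cB_append (ih hw'.2) ?_
          refine ⟨?_, trivial⟩
          rw [endHd_rev]
          show ((hfbE e' && hfbE (revET e)) = true) ↔ v ∈ W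
          rw [hfbE_rev, Bool.and_comm]
          exact hw'.1

end Walk

end MixedGraph

end Aux19
section Aux19b

open Relation

namespace MixedGraph

variable {G : MixedGraph V}

namespace Walk

variable {W S L Z : Set V}

lemma hfbE_right : hfbE .right = false := rfl
lemma hsbE_right : hsbE .right = true := rfl

lemma rw_connB : ∀ {a b : V} (w : G.Walk a b), RW w → hNoW W w → connB W true w := by
  intro a b w
  induction w with
  | nil v => intro _ _; trivial
  | cons u v w e he p ih =>
      rintro ⟨rfl, hrw⟩ ⟨hu, hh⟩
      refine ⟨?_, ih hrw hh⟩
      simp [hfbE, hu]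

lemma rw_cB : ∀ {a b : V} (w : G.Walk a b), RW w → tNoW W w → cB W w := by
  intro a b w hrw ht
  cases w with
  | nil v => trivial
  | cons u v w e he p =>
      obtain ⟨rfl, hrw'⟩ := hrw
      exact rw_connB p hrw' ht

lemma hNoW_of_t : ∀ {a b : V} (w : G.Walk a b), tNoW W w → a ∉ W → hNoW W w := by
  intro a b w ht ha
  cases w with
  | nil v => trivial
  | cons u v w e he p => exact ⟨ha, ht⟩

lemma endHd_RW : ∀ {a b : V} (w : G.Walk a b), RW w → endHd true w = true := by
  intro a b w
  induction w with
  | nil v => intro _; rfl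
  | cons u v w e he p ih =>
      rintro ⟨rfl, hrw⟩
      exact ih hrw

lemma startHd_RW : ∀ {a b : V} (w : G.Walk a b), RW w → startHd false w = false := by
  intro a b w hrw
  cases w with
  | nil v => rfl
  | cons u v w e he p =>
      obtain ⟨rfl, -⟩ := hrw
      rfl

/-- Descend along a directed path towards `t`, stopping at the first `W`-node. -/
lemma desc {t : V} (ht : t ∉ W) :
    ∀ {n : V}, G.Anc n t → n ∉ W →
      (∃ w : G.Walk n t, RW w ∧ tNoW W w) ∨
        (∃ z ∈ W, ∃ w : G.Walk n z, RW w ∧ tNoW W w ∧ n ≠ z) := by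
  intro n h
  induction h using Relation.ReflTransGen.head_induction_on with
  | refl => exact fun _ => Or.inl ⟨.nil t, trivial, trivial⟩
  | head hstep hrest ih =>
      rename_i a c
      intro haW
      by_cases hcW : c ∈ W
      · have hac : a ≠ c := fun h => haW (h ▸ hcW)
        exact Or.inr ⟨c, hcW, .cons a c c .right hstep (.nil c), ⟨rfl, trivial⟩,
          trivial, hac⟩
      · rcases ih hcW with ⟨w, hrw, htn⟩ | ⟨z, hz, w, hrw, htn, hnz⟩
        · exact Or.inl ⟨.cons a c t .right hstep w, ⟨rfl, hrw⟩, hNoW_of_t w htn hcW⟩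
        · have haz : a ≠ z := fun h => haW (h ▸ hz)
          exact Or.inr ⟨z, hz, .cons a c z .right hstep w, ⟨rfl, hrw⟩,
            hNoW_of_t w htn hcW, haz⟩

/-- Forward descent along a connecting walk from a tail edge. -/
lemma dlf (hDAG : G.IsDAG) :
    ∀ {y b : V} (p : G.Walk y b) {x : V}, G.dir x y → connB W true p →
      TransGen G.dir x b ∨ ∃ c ∈ W, TransGen G.dir x c := by
  intro y b p
  induction p with
  | nil v => intro x h _; exact Or.inl (.single h)
  | cons y z w e' h' p' ih =>
      intro x h hp
      obtain ⟨hiff, hrest⟩ := hp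
      by_cases hb : hfbE e' = true
      · exact Or.inr ⟨y, hiff.mp (by simp [hb]), .single h⟩
      · cases e' with
        | left => simp [hfbE] at hb
        | both => simp [hfbE] at hb
        | undirEdge => exact absurd h' (hDAG.2.1 y z)
        | right =>
            rcases ih h' hrest with htg | ⟨c, hc, htg⟩
            · exact Or.inl (htg.head h)
            · exact Or.inr ⟨c, hc, htg.head h⟩

/-- Cut a connecting walk at the last occurrence of `u` among its heads. -/
lemma cut {u v : V} : ∀ {x : V} (w : G.Walk x v), cB W w → u ∈ heads w →
    ∃ (m : V) (e : EType) (h : G.IsEdge e u m) (p : G.Walk m v),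
      connB W (hsbE e) p ∧ u ∉ heads p := by
  intro x w
  induction w with
  | nil v' => intro _ hmem; simp [heads] at hmem
  | cons x y w e h p ih =>
      intro hcB hmem
      by_cases hup : u ∈ heads p
      · exact ih (connB_proj hcB) hup
      · have hux : u = x := by
          rcases List.mem_cons.mp hmem with h' | h'
          · exact h'
          · exact absurd h' hup
        subst hux
        exact ⟨y, e, h, p, hcB, hup⟩

lemma iB_mono {S' L' : Set V} (hS : S ⊆ S') (hL : L ⊆ L') :
    ∀ {a b : V} {ph : Bool} (w : G.Walk a b), iB S L ph w → iB S' L' ph w := by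
  intro a b ph w
  induction w generalizing ph with
  | nil v => intro _; trivial
  | cons u v w e he p ih =>
      rintro ⟨h1, h2, h3⟩
      exact ⟨fun h => hS (h1 h), fun h => hL (h2 h), ih h3⟩

/-- Bridge: Prop-valued `connFrom` to Bool-valued `connB`. -/
lemma connFrom_iff_connB : ∀ {a b : V} (w : G.Walk a b) (ph : Prop) (pb : Bool),
    (ph ↔ pb = true) → (w.connFrom Z ph ↔ connB Z pb w) := by
  intro a b w
  induction w with
  | nil v => intro _ _ _; exact Iff.rfl
  | cons u v w e he p ih =>
      intro ph pb hiff
      show ((ph ∧ e.headFst) ↔ u ∈ Z) ∧ p.connFrom Z e.headSnd ↔ _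
      have h1 : (ph ∧ e.headFst) ↔ ((pb && hfbE e) = true) := by
        rw [Bool.and_eq_true, hiff, headFst_iff_hfbE]
      rw [h1, ih e.headSnd (hsbE e) (headSnd_iff_hsbE e)]
      exact Iff.rfl

lemma connBy_iff_cB : ∀ {a b : V} (w : G.Walk a b), w.ConnBy Z ↔ cB Z w := by
  intro a b w
  cases w with
  | nil v => exact Iff.rfl
  | cons u v w e he p =>
      exact connFrom_iff_connB p e.headSnd (hsbE e) (headSnd_iff_hsbE e)

/-- Bridge: `indFrom` to `iB`. -/
lemma indFrom_iB {T : Set V} : ∀ {a b : V} (w : G.Walk a b) (ph : Prop) (pb : Bool),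
    (ph ↔ pb = true) → w.indFrom L T ph →
      iB {x | ∃ t ∈ T, G.Anc x t} L pb w := by
  intro a b w
  induction w with
  | nil v => intro _ _ _ _; trivial
  | cons u v w e he p ih =>
      intro ph pb hiff h
      obtain ⟨h1, h2, h3⟩ := h
      have heq : ((pb && hfbE e) = true) ↔ (ph ∧ e.headFst) := by
        rw [Bool.and_eq_true, hiff, headFst_iff_hfbE]
      exact ⟨fun hx => h1 (heq.mp hx), fun hx => h2 (fun hy => hx (heq.mpr hy)),
        ih e.headSnd (hsbE e) (headSnd_iff_hsbE e) h3⟩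

lemma headAtEnd_endHd : ∀ {a b : V} (w : G.Walk a b), w.headAtEnd →
    ∀ ph, endHd ph w = true := by
  intro a b w
  induction w with
  | nil v => intro h; exact absurd h (by simp [Walk.headAtEnd])
  | cons u v w e he p ih =>
      intro h ph
      cases p with
      | nil _ =>
          have : e.headSnd := h
          show hsbE e = true
          exact (headSnd_iff_hsbE e).mp this
      | cons c1 c2 c3 e2 he2 p2 =>
          exact ih h (hsbE e)

end Walk

end MixedGraph

end Aux19b
section Aux19c

open Relation

namespace MixedGraph

variable {G : MixedGraph V}

/-- Ancestors of `{u, v}`. -/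
def anUV (G : MixedGraph V) (u v : V) : Set V := {n | G.Anc n u ∨ G.Anc n v}

/-- The canonical separator candidate used to extract inducing walks. -/
def wst (G : MixedGraph V) (L : Set V) (u v : V) : Set V :=
  {n | n ∈ G.anUV u v ∧ n ∉ L ∧ n ≠ u ∧ n ≠ v}

/-- Strict ancestry towards `u` or a `wst`-node. -/
def goodT (G : MixedGraph V) (L : Set V) (u v x : V) : Prop :=
  TransGen G.dir x u ∨ ∃ c ∈ G.wst L u v, TransGen G.dir x c

variable {L : Set V} {u v : V}

lemma goodT_anUV {x : V} (h : G.goodT L u v x) : x ∈ G.anUV u v := by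
  rcases h with h | ⟨c, hc, htg⟩
  · exact Or.inl h.to_reflTransGen
  · rcases hc.1 with h' | h'
    · exact Or.inl (htg.to_reflTransGen.trans h')
    · exact Or.inr (htg.to_reflTransGen.trans h')

lemma no_transGen_v_wst (hDAG : G.IsDAG) (hvu : ¬ G.Anc v u) :
    ∀ c ∈ G.wst L u v, ¬ TransGen G.dir v c := by
  rintro c hc htg
  rcases hc.1 with h' | h'
  · exact hvu (htg.to_reflTransGen.trans h')
  · exact hDAG.2.2 c (TransGen.trans_right h' htg)

lemma not_goodT_v (hDAG : G.IsDAG) (hvu : ¬ G.Anc v u) : ¬ G.goodT L u v v := by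
  rintro (h | ⟨c, hc, htg⟩)
  · exact hvu h.to_reflTransGen
  · exact no_transGen_v_wst hDAG hvu c hc htg

namespace Walk

/-- Main structural analysis of a connecting walk given `wst G L u v`. -/
lemma int_main (hDAG : G.IsDAG) :
    ∀ {m : V} (p : G.Walk m v) (ps : Bool), ¬ G.Anc v u →
      connB (G.wst L u v) ps p → (ps = false → G.goodT L u v m) →
      (∀ x ∈ heads p, x ≠ u) →
      iB (G.anUV u v) L ps p ∧ (endHd ps p = false → G.goodT L u v v) := by
  intro m p
  induction p with
  | nil _ => exact fun ps _ _ hinv _ => ⟨trivial, hinv⟩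
  | cons x y w e' h' p' ih =>
      intro ps hvu hp hinv hu
      obtain ⟨hiff, hrest⟩ := hp
      have hxne : x ≠ u := hu x (List.mem_cons_self)
      have hutail : ∀ z ∈ heads p', z ≠ u := fun z hz => hu z (List.mem_cons_of_mem _ hz)
      by_cases hcol : (ps && hfbE e') = true
      · have hxW : x ∈ G.wst L u w := hiff.mp hcol
        have hinv' : hsbE e' = false → G.goodT L u w y := by
          intro hse
          cases e' with
          | right => simp [hsbE] at hse
          | both => simp [hsbE] at hse
          | undirEdge => exact absurd h' (hDAG.2.1 x y)
          | left => exact Or.inr ⟨x, hxW, .single h'⟩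
        obtain ⟨hi, he⟩ := ih (hsbE e') hvu hrest hinv' hutail
        exact ⟨⟨fun _ => hxW.1, fun h => absurd hcol h, hi⟩, he⟩
      · -- non-collider at x
        have hxnW : x ∉ G.wst L u w := fun hx => hcol (hiff.mpr hx)
        have hgood : G.goodT L u w x ∨
            (TransGen G.dir x w ∨ ∃ c ∈ G.wst L u w, TransGen G.dir x c) := by
          by_cases hps : ps = true
          · have hfe : hfbE e' ≠ true := fun h => hcol (by simp [hps, h])
            cases e' with
            | left => simp [hfbE] at hfe
            | both => simp [hfbE] at hfe
            | undirEdge => exact absurd h' (hDAG.2.1 x y)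
            | right =>
                subst hps
                exact Or.inr (dlf hDAG p' h' hrest)
          · exact Or.inl (hinv (by simpa using hps))
        have hxAn : x ∈ G.anUV u w := by
          rcases hgood with h | h | ⟨c, hc, htg⟩
          · exact goodT_anUV h
          · exact Or.inr h.to_reflTransGen
          · exact goodT_anUV (Or.inr ⟨c, hc, htg⟩)
        have hxw : x ≠ w := by
          intro hxw
          rcases hgood with h | h | ⟨c, hc, htg⟩
          · exact not_goodT_v hDAG hvu (hxw ▸ h)
          · exact hDAG.2.2 x (hxw ▸ h)
          · exact no_transGen_v_wst hDAG hvu c hc (hxw ▸ htg)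
        have hxL : x ∈ L := by
          by_contra hxL
          exact hxnW ⟨hxAn, hxL, hxne, hxw⟩
        have hinv' : hsbE e' = false → G.goodT L u w y := by
          intro hse
          cases e' with
          | right => simp [hsbE] at hse
          | both => simp [hsbE] at hse
          | undirEdge => exact absurd h' (hDAG.2.1 x y)
          | left =>
              have hps : ps = false := by
                cases hps' : ps
                · rfl
                · exact absurd (by simp [hps', hfbE]) hcol
              rcases hinv hps with h | ⟨c, hc, htg⟩
              · exact Or.inl (TransGen.head h' h)
              · exact Or.inr ⟨c, hc, TransGen.head h' htg⟩
        obtain ⟨hi, he⟩ := ih (hsbE e') hvu hrest hinv' hutail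
        exact ⟨⟨fun h => absurd h hcol, fun _ => hxL, hi⟩, he⟩

/-- Extraction of an inducing walk from a MAG adjacency. -/
lemma extract (hDAG : G.IsDAG) (hadj : G.magAdj L u v) (hvu : ¬ G.Anc v u) :
    ∃ (m : V) (e : EType) (h : G.IsEdge e u m) (p : G.Walk m v),
      iB (G.anUV u v) L (hsbE e) p ∧ endHd (hsbE e) p = true ∧
      (¬ G.Anc u v → hfbE e = true) := by
  have hdisj : Disjoint (G.wst L u v) L := Set.disjoint_left.mpr fun x hx => hx.2.1
  have hunW : u ∉ G.wst L u v := fun h => h.2.2.1 rfl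
  have hvnW : v ∉ G.wst L u v := fun h => h.2.2.2 rfl
  obtain ⟨w₀, hc₀⟩ := (hadj.2.2.2 _ hdisj hunW hvnW).1
  have hcB₀ : cB (G.wst L u v) w₀ := (connBy_iff_cB w₀).mp hc₀
  have hmem : u ∈ heads w₀ := by
    cases w₀ with
    | nil _ => exact absurd rfl hadj.2.2.1
    | cons a b c e h p => exact List.mem_cons_self
  obtain ⟨m, e, h, p, hcB, hup⟩ := cut w₀ hcB₀ hmem
  have hinv : hsbE e = false → G.goodT L u v m := by
    intro hse
    cases e with
    | right => simp [hsbE] at hse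
    | both => simp [hsbE] at hse
    | undirEdge => exact absurd h (hDAG.2.1 u m)
    | left => exact Or.inl (.single h)
  obtain ⟨hiB, hend'⟩ := int_main hDAG p (hsbE e) hvu hcB hinv
    (fun x hx heq => hup (heq ▸ hx))
  have hend : endHd (hsbE e) p = true := by
    cases hE : endHd (hsbE e) p
    · exact absurd (hend' hE) (not_goodT_v hDAG hvu)
    · rfl
  refine ⟨m, e, h, p, hiB, hend, ?_⟩
  intro hnuv
  by_contra hfe
  have hfe' : hfbE e = false := by simpa using hfe
  cases e with
  | left => simp [hfbE] at hfe'
  | both => simp [hfbE] at hfe'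
  | undirEdge => exact absurd h (hDAG.2.1 u m)
  | right =>
      rcases dlf hDAG p h hcB with htg | ⟨c, hc, htg⟩
      · exact hnuv htg.to_reflTransGen
      · rcases hc.1 with h' | h'
        · exact hDAG.2.2 c (TransGen.trans_right h' htg)
        · exact hnuv (htg.to_reflTransGen.trans h')

end Walk

end MixedGraph

end Aux19c
section Aux19d

open Relation

namespace MixedGraph

variable {G : MixedGraph V}

/-- An "inducing-walk piece" from `u` to `v` with interior conditions w.r.t.
`S` and `L`, arrowhead at `v`, and start-head status `sh`. -/
def IWp (G : MixedGraph V) (S L : Set V) (u v : V) (sh : Bool) : Prop :=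
  ∃ (m : V) (e : EType) (_ : G.IsEdge e u m) (p : G.Walk m v),
    Walk.iB S L (hsbE e) p ∧ Walk.endHd (hsbE e) p = true ∧ hfbE e = sh

namespace Walk

variable {S L W : Set V}

lemma IW_glue {u n v : V} {sh : Bool} (h₁ : IWp G S L u n sh)
    (h₂ : IWp G S L n v true) (hnS : n ∈ S) : IWp G S L u v sh := by
  obtain ⟨m₁, e₁, he₁', p₁, hi₁, he₁, hs₁⟩ := h₁
  obtain ⟨m₂, e₂, he₂', p₂, hi₂, he₂, hs₂⟩ := h₂
  refine ⟨m₁, e₁, he₁', p₁.append (.cons n m₂ v e₂ he₂' p₂), ?_, ?_, hs₁⟩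
  · refine (iB_append _ _ _).mpr ⟨hi₁, ?_⟩
    rw [he₁]
    exact ⟨fun _ => hnS, fun hne => absurd (by simp [hs₂]) hne, hi₂⟩
  · rw [endHd_append, he₁]
    exact he₂

lemma edge_to_IWp (hDAG : G.IsDAG) {a b : V} (hadj : G.magAdj L a b)
    (hba : ¬ G.Anc b a) (hSa : ∀ x, G.Anc x a → x ∈ S)
    (hSb : ∀ x, G.Anc x b → x ∈ S) :
    ∃ sh, IWp G S L a b sh ∧ (¬ G.Anc a b → sh = true) := by
  obtain ⟨m, e, he, p, hiB, hend, hst⟩ := extract hDAG hadj hba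
  exact ⟨hfbE e, ⟨m, e, he, p,
    iB_mono (fun x hx => hx.elim (hSa x) (hSb x)) (fun _ h => h) p hiB, hend, rfl⟩, hst⟩

lemma q_to_IWp {A X D : V} (hXDa : G.Anc X D)
    (hind : ∃ q : G.Walk X D, G.IsInducing ∅ L q ∧ q.headAtStart ∧ q.headAtEnd) :
    IWp G (G.anUV A D) L X D true := by
  obtain ⟨q, ⟨hqpath, hqbody⟩, hst, hen⟩ := hind
  cases q with
  | nil _ => exact absurd hst (by simp [Walk.headAtStart])
  | cons _ m _ e he p =>
      have hiB := indFrom_iB p e.headSnd (hsbE e) (headSnd_iff_hsbE e) hqbody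
      refine ⟨m, e, he, p, iB_mono ?_ (fun _ h => h) p hiB,
        headAtEnd_endHd _ hen false, (headFst_iff_hfbE e).mp hst⟩
      rintro x ⟨t, ht, hanc⟩
      have ht' : t = X ∨ t = D := by simpa using ht
      rcases ht' with rfl | rfl
      · exact Or.inr (hanc.trans hXDa)
      · exact Or.inr hanc

/-- The bounce gadget: descend from `m` to the first `W`-node `z` and return. -/
lemma bounce_case {m z D' : V} (hmW : m ∉ W) (hzW : z ∈ W)
    (wd : G.Walk m z) (hrw : RW wd) (htn : tNoW W wd) (hnz : m ≠ z)
    (T2 : G.Walk m D') (hT2 : cB W T2) :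
    ∃ w : G.Walk m D', cB W w ∧ startHd false w = false := by
  cases wd with
  | nil _ => exact absurd rfl hnz
  | cons _ m1 _ e0 h0 p0 =>
      obtain ⟨rfl, hrw0⟩ : e0 = EType.right ∧ RW p0 := hrw
      refine ⟨(Walk.cons m m1 z .right h0 p0).append
        ((rev (Walk.cons m m1 z .right h0 p0)).append T2), ?_, ?_⟩
      · refine cB_append (rw_cB _ ⟨rfl, hrw0⟩ htn) ?_
        have hend : endHd false (Walk.cons m m1 z .right h0 p0) = true := endHd_RW p0 hrw0
        rw [hend]
        refine (connB_append _ _ _).mpr ⟨?_, ?_⟩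
        · refine glue2 (cB_rev (rw_cB _ ⟨rfl, hrw0⟩ htn)) ?_
          rw [startHd_rev, hend]
          simpa using hzW
        · rw [endHd_rev]
          show connB W false T2
          exact glue2 hT2 (by simp [hmW])
      · rfl

/-- The main construction: turn an inducing walk into a connecting walk. -/
lemma rec_main (hDAG : G.IsDAG) {A : V} (hWL : Disjoint W L) (hA : A ∉ W) :
    ∀ {m D : V} (p : G.Walk m D) (ps : Bool), D ∉ W →
      iB (G.anUV A D) L ps p →
      (∃ w : G.Walk A D, cB W w) ∨
        (∃ w : G.Walk m D, cB W w ∧ (((ps && startHd false w) = true) ↔ m ∈ W)) := by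
  intro m D p
  induction p with
  | nil c =>
      intro ps hD _
      exact Or.inr ⟨.nil c, trivial, by simp [startHd, hD]⟩
  | cons n y dd e h p' ih =>
      intro ps hD hiB
      obtain ⟨H1, H2, H3⟩ := hiB
      rcases ih (hsbE e) hD H3 with res | ⟨w', hcw', hjw'⟩
      · exact Or.inl res
      · have hT2 : cB W (Walk.cons n y dd e h w') := glue2 hcw' hjw'
        by_cases hmW : n ∈ W
        · have hcolE : (ps && hfbE e) = true := by
            by_contra hne
            exact Set.disjoint_left.mp hWL hmW (H2 hne)
          exact Or.inr ⟨.cons n y dd e h w', hT2, by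
            show ((ps && hfbE e) = true) ↔ n ∈ W
            simp [hcolE, hmW]⟩
        · by_cases hcol : (ps && hfbE e) = true
          · rcases H1 hcol with hAncA | hAncD
            · -- ancestor of A : bounce or restart
              rcases desc hA hAncA hmW with ⟨wa, hrw, htn⟩ | ⟨z, hzW, wd, hrw, htn, hnz⟩
              · -- restart: a full walk from A
                refine Or.inl ⟨(rev wa).append (.cons n y dd e h w'), ?_⟩
                refine cB_append (cB_rev (rw_cB wa hrw htn)) ?_
                rw [endHd_rev]
                refine glue2 hT2 ?_
                rw [startHd_RW wa hrw]
                simp [hmW]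
              · obtain ⟨w, hw, hsh⟩ := bounce_case hmW hzW wd hrw htn hnz
                  (.cons n y dd e h w') hT2
                exact Or.inr ⟨w, hw, by rw [hsh]; simp [hmW]⟩
            · -- ancestor of D : early termination or bounce
              rcases desc hD hAncD hmW with ⟨wdd, hrw, htn⟩ | ⟨z, hzW, wd, hrw, htn, hnz⟩
              · refine Or.inr ⟨wdd, rw_cB wdd hrw htn, ?_⟩
                rw [startHd_RW wdd hrw]
                simp [hmW]
              · obtain ⟨w, hw, hsh⟩ := bounce_case hmW hzW wd hrw htn hnz
                  (.cons n y dd e h w') hT2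
                exact Or.inr ⟨w, hw, by rw [hsh]; simp [hmW]⟩
          · exact Or.inr ⟨.cons n y dd e h w', hT2, by
              show ((ps && hfbE e) = true) ↔ n ∈ W
              exact iff_of_false hcol hmW⟩

end Walk

end MixedGraph

end Aux19d
section Aux19e

open Relation

namespace MixedGraph

variable {G : MixedGraph V}

namespace Walk

lemma chain_IWp (hDAG : G.IsDAG) {L : Set V} {A X D : V} (hXDa : G.Anc X D) :
    ∀ (vs : List V) (a : V),
      (∀ x, G.Anc x a → x ∈ G.anUV A D) →
      ((G.mag L).dir a ((vs ++ [X]).head (by simp)) ∨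
        (G.mag L).bi a ((vs ++ [X]).head (by simp))) →
      (vs ++ [X]).Chain' (G.mag L).bi →
      (∀ v' ∈ vs, G.Anc v' D) →
      ∃ sh, IWp G (G.anUV A D) L a X sh ∧
        (¬ G.Anc a ((vs ++ [X]).head (by simp)) → sh = true) := by
  intro vs
  induction vs with
  | nil =>
      intro a haT hfirst _ _
      obtain ⟨hadj, hba⟩ : G.magAdj L a X ∧ ¬ G.Anc X a := by
        rcases hfirst with h | h
        · exact ⟨h.1, h.2.2⟩
        · exact ⟨h.1, h.2.2⟩
      exact edge_to_IWp hDAG hadj hba haT (fun x hx => Or.inr (hx.trans hXDa))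
  | cons v vs' ih =>
      intro a haT hfirst hchain hpar
      have hvD : G.Anc v D := hpar v (List.mem_cons_self)
      have hSv : ∀ x, G.Anc x v → x ∈ G.anUV A D :=
        fun x hx => Or.inr (hx.trans hvD)
      obtain ⟨hadj, hba⟩ : G.magAdj L a v ∧ ¬ G.Anc v a := by
        rcases hfirst with h | h
        · exact ⟨h.1, h.2.2⟩
        · exact ⟨h.1, h.2.2⟩
      obtain ⟨sh, hp₁, him₁⟩ := edge_to_IWp hDAG hadj hba haT hSv
      have hchain' : ((v :: vs') ++ [X]).Chain' (G.mag L).bi := hchain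
      obtain ⟨hh, hct⟩ := List.isChain_cons.mp hchain'
      have hbvh : (G.mag L).bi v ((vs' ++ [X]).head (by simp)) := by
        exact hh _ (Option.mem_def.mpr (List.head?_eq_head (by simp)))
      obtain ⟨sh', hp₂, him₂⟩ := ih v hSv (Or.inr hbvh) hct
        (fun x hx => hpar x (List.mem_cons_of_mem _ hx))
      have hsh' : sh' = true := him₂ hbvh.2.1
      subst hsh'
      exact ⟨sh, IW_glue hp₁ hp₂ (Or.inr hvD), fun h => him₁ h⟩

end Walk

end MixedGraph

end Aux19e
theorem statement_19 (G : MixedGraph V) (hDAG : G.IsDAG) (L : Set V)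
    (A X D : V) (vs : List V)
    (hfirst : (G.mag L).dir A ((vs ++ [X]).head (by simp)) ∨
      (G.mag L).bi A ((vs ++ [X]).head (by simp)))
    (hchain : (vs ++ [X]).Chain' (G.mag L).bi)
    (hXD : (G.mag L).dir X D)
    (hpar : ∀ v ∈ vs, (G.mag L).dir v D)
    (hpath : (A :: (vs ++ [X, D])).Nodup)
    (hind : ∃ q : G.Walk X D, G.IsInducing ∅ L q ∧ q.headAtStart ∧ q.headAtEnd) :
    ∀ Z : Set V, Disjoint Z L → A ∉ Z → D ∉ Z → (G.mag L).MConn Z A D := by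
  intro Z _ _ _
  classical
  have hadjAhd : G.magAdj L A ((vs ++ [X]).head (by simp)) := by
    rcases hfirst with h | h
    · exact h.1
    · exact h.1
  have hAL : A ∉ L := hadjAhd.1
  have hDL : D ∉ L := hXD.1.2.1
  have hXDa : G.Anc X D := hXD.2.1
  have hADne : A ≠ D := by
    have h1 := (List.nodup_cons.mp hpath).1
    intro h
    exact h1 (by rw [h]; simp)
  have hparA : ∀ v' ∈ vs, G.Anc v' D := fun v' hv' => (hpar v' hv').2.1
  obtain ⟨sh, hpAX, -⟩ :=
    Walk.chain_IWp hDAG hXDa vs A (fun x hx => Or.inl hx) hfirst hchain hparA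
  have hq : IWp G (G.anUV A D) L X D true := Walk.q_to_IWp hXDa hind
  have hΩ : IWp G (G.anUV A D) L A D sh := Walk.IW_glue hpAX hq (Or.inr hXDa)
  have hconn : ∀ W : Set V, Disjoint W L → A ∉ W → D ∉ W →
      G.MConn W A D ∧ G.MConn W D A := by
    intro W hWL hAW hDW
    obtain ⟨m, e, he, p, hiB, hend, -⟩ := hΩ
    rcases Walk.rec_main hDAG hWL hAW p (hsbE e) hDW hiB with ⟨w, hw⟩ | ⟨w, hw, hj⟩
    · exact ⟨⟨w, (Walk.connBy_iff_cB w).mpr hw⟩,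
        ⟨Walk.rev w, (Walk.connBy_iff_cB _).mpr (Walk.cB_rev hw)⟩⟩
    · have hfull : Walk.cB W (Walk.cons A m D e he w) := Walk.glue2 hw hj
      exact ⟨⟨_, (Walk.connBy_iff_cB _).mpr hfull⟩,
        ⟨Walk.rev _, (Walk.connBy_iff_cB _).mpr (Walk.cB_rev hfull)⟩⟩
  have hadjAD : G.magAdj L A D := ⟨hAL, hDL, hADne, hconn⟩
  by_cases hAD : G.Anc A D
  · by_cases hDA : G.Anc D A
    · exfalso
      rcases Relation.ReflTransGen.cases_head hAD with h | ⟨c, hc, hcd⟩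
      · exact hADne h
      · exact hDAG.2.2 D
          (Relation.TransGen.trans_right hDA (Relation.TransGen.head' hc hcd))
    · exact ⟨Walk.cons A D D .right ⟨hadjAD, hAD, hDA⟩ (.nil D), trivial⟩
  · by_cases hDA : G.Anc D A
    · have hadjDA : G.magAdj L D A :=
        ⟨hDL, hAL, fun h => hADne h.symm,
          fun W h1 h2 h3 => ⟨(hconn W h1 h3 h2).2, (hconn W h1 h3 h2).1⟩⟩
      exact ⟨Walk.cons A D D .left ⟨hadjDA, hDA, hAD⟩ (.nil D), trivial⟩
    · exact ⟨Walk.cons A D D .both ⟨hadjAD, hAD, hDA⟩ (.nil D), trivial⟩
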